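/- Let T ⊆ ℝ with a := inf T ∈ T, let F : T → c(M) satisfy V⁺(F,T) < +∞, and let t₀ ∈ T, X₀ ∈ c(M). Then there exists a set-valued selector Γ : T → c(M) of F (i.e., Γ(t) ⊆ F(t) for all t ∈ T) of bounded Jordan variation such that d_H(X₀, Γ(t₀)) ≤ e(X₀, F(t₀)), V(Γ, T∩[a,t₀)) ≤ V⁺(F, T∩[a,t₀)), and V(Γ, T∩[t₀,+∞)) ≤ V⁺(F, T∩[t₀,+∞)). In particular, if X₀ ⊆ F(t₀) then Γ(t₀) = X₀. -/

import Mathlib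

open Set Metric EMetric Filter
open scoped ENNReal Pointwise

noncomputable def exc {M : Type*} [MetricSpace M] (X Y : Set M) : ℝ≥0∞ :=
  ⨆ x ∈ X, EMetric.infEdist x Y

noncomputable def varBy {M : Type*} [MetricSpace M]
    (D : Set M → Set M → ℝ≥0∞) (F : ℝ → Set M) (T : Set ℝ) : ℝ≥0∞ :=
  ⨆ p : {p : ℕ × (ℕ → ℝ) // Monotone p.2 ∧ ∀ i, p.2 i ∈ T},
    ∑ i ∈ Finset.range p.1.1, D (F (p.1.2 i)) (F (p.1.2 (i + 1)))

noncomputable def varPlus {M : Type*} [MetricSpace M] (F : ℝ → Set M) (T : Set ℝ) : ℝ≥0∞ :=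
  varBy exc F T

noncomputable def varMinus {M : Type*} [MetricSpace M] (F : ℝ → Set M) (T : Set ℝ) : ℝ≥0∞ :=
  varBy (fun X Y => exc Y X) F T

noncomputable def varH {M : Type*} [MetricSpace M] (F : ℝ → Set M) (T : Set ℝ) : ℝ≥0∞ :=
  varBy EMetric.hausdorffEdist F T

/-!
Write `v s t = V⁺(F, T ∩ [s, t])`; it is superadditive and dominates `e(F s, F t)`. Call `φ`
admissible on a finite `P ⊆ T` if `φ r ∈ F r` and `d(φ r, φ r') ≤ v r r'` for `r ≤ r'` in `P`.
An admissible path extends to any larger point `a` by a nearest-point step from its last value,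
since `e(F r, F a) ≤ v r a` and `v` is superadditive. The selector `Γ t` consists of the points
lying, for every finite `P ⊆ T ∩ (-∞, t]`, in the closure of the endpoints at `t` of admissible
paths on `P ∪ {t}`; Cantor's intersection theorem makes it nonempty and gives
`d_H(Γ s, Γ t) ≤ v s t`. The selector of the theorem is this construction on `T ∩ (-∞, t₀)`,
glued to the same construction on `T ∩ [t₀, ∞)` with `F t₀` replaced by its points within
`e(X₀, F t₀)` of `X₀`.
-/

section Excess

variable {M : Type*} [MetricSpace M]

lemma exc_le_iff {X Y : Set M} {c : ℝ≥0∞} : exc X Y ≤ c ↔ ∀ x ∈ X, infEDist x Y ≤ c :=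
  iSup₂_le_iff

lemma infEDist_le_exc {x : M} {X : Set M} (hx : x ∈ X) (Y : Set M) : infEDist x Y ≤ exc X Y :=
  exc_le_iff.1 le_rfl x hx

lemma exc_mono_left {X X' : Set M} (h : X' ⊆ X) (Y : Set M) : exc X' Y ≤ exc X Y :=
  exc_le_iff.2 fun _ hx => infEDist_le_exc (h hx) Y

lemma exc_eq_zero_of_subset {X Y : Set M} (h : X ⊆ Y) : exc X Y = 0 :=
  nonpos_iff_eq_zero.1 <| exc_le_iff.2 fun _ hx => (infEDist_zero_of_mem (h hx)).le

lemma infEDist_le_infEDist_add_exc (x : M) (X Y : Set M) :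
    infEDist x Y ≤ infEDist x X + exc X Y := by
  simp_rw [infEDist, ENNReal.iInf_add]
  exact le_iInf₂ fun y hy =>
    infEDist_le_edist_add_infEDist.trans (add_le_add le_rfl (infEDist_le_exc hy Y))

lemma infEDist_le_exc_of_mem_closure {x : M} {X : Set M} (hx : x ∈ closure X) (Y : Set M) :
    infEDist x Y ≤ exc X Y := by
  simpa [mem_closure_iff_infEDist_zero.1 hx] using infEDist_le_infEDist_add_exc x X Y

def nearPart (X Y : Set M) : Set M :=
  Y ∩ {y | infEDist y X ≤ exc X Y}

lemma nearPart_subset (X Y : Set M) : nearPart X Y ⊆ Y :=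
  inter_subset_left

lemma isCompact_nearPart (X : Set M) {Y : Set M} (hY : IsCompact Y) : IsCompact (nearPart X Y) :=
  hY.inter_right (isClosed_le continuous_infEDist continuous_const)

lemma exists_mem_nearPart_edist_le {X Y : Set M} (hY : IsCompact Y) (hYne : Y.Nonempty)
    {x : M} (hx : x ∈ X) : ∃ y ∈ nearPart X Y, edist x y ≤ exc X Y := by
  obtain ⟨y, hy, hxy⟩ := hY.exists_infEDist_eq_edist hYne x
  have hle : edist x y ≤ exc X Y := hxy ▸ infEDist_le_exc hx Y
  exact ⟨y, ⟨hy, (infEDist_le_edist_of_mem hx).trans ((edist_comm y x).trans_le hle)⟩, hle⟩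

lemma nearPart_nonempty {X Y : Set M} (hX : X.Nonempty) (hY : IsCompact Y) (hYne : Y.Nonempty) :
    (nearPart X Y).Nonempty :=
  have ⟨_, hx⟩ := hX
  have ⟨y, hy, _⟩ := exists_mem_nearPart_edist_le hY hYne hx
  ⟨y, hy⟩

lemma hausdorffEDist_nearPart_le {X Y : Set M} (hY : IsCompact Y) (hYne : Y.Nonempty) :
    hausdorffEDist X (nearPart X Y) ≤ exc X Y :=
  hausdorffEDist_le_of_infEDist
    (fun _ hx => have ⟨_, hy, hle⟩ := exists_mem_nearPart_edist_le hY hYne hx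
      (infEDist_le_edist_of_mem hy).trans hle)
    fun _ hy => hy.2

lemma nearPart_eq_of_subset {X Y : Set M} (hX : IsClosed X) (h : X ⊆ Y) : nearPart X Y = X := by
  ext y
  simp only [nearPart, exc_eq_zero_of_subset h, nonpos_iff_eq_zero, mem_inter_iff, mem_ofPred_eq,
    ← mem_iff_infEDist_zero_of_closed hX]
  exact ⟨And.right, fun hy => ⟨h hy, hy⟩⟩

end Excess

lemma infEDist_iInter_le {M : Type*} [EMetricSpace M] {ι : Type*} [Nonempty ι] {K : ι → Set M}
    (hK : Directed (· ⊇ ·) K) (hKc : ∀ i, IsCompact (K i)) {x : M} {c : ℝ≥0∞}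
    (hx : ∀ i, infEDist x (K i) ≤ c) : infEDist x (⋂ i, K i) ≤ c := by
  rcases eq_or_ne c ⊤ with rfl | hc
  · exact le_top
  let L i := K i ∩ {y | edist x y ≤ c}
  have hL : ∀ i, IsCompact (L i) := fun i =>
    (hKc i).inter_right (isClosed_le (continuous_const.edist continuous_id) continuous_const)
  have hLne : ∀ i, (L i).Nonempty := fun i => by
    have hne : (K i).Nonempty := nonempty_iff_ne_empty.2 fun h => hc <| top_le_iff.1 <| by
      simpa [h] using hx i
    obtain ⟨y, hy, hxy⟩ := (hKc i).exists_infEDist_eq_edist hne x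
    exact ⟨y, hy, show edist x y ≤ c from hxy ▸ hx i⟩
  have hLdir : Directed (· ⊇ ·) L := fun i j => (hK i j).imp fun _ hk =>
    ⟨inter_subset_inter_left _ hk.1, inter_subset_inter_left _ hk.2⟩
  obtain ⟨y, hy⟩ := IsCompact.nonempty_iInter_of_directed_nonempty_isCompact_isClosed L hLdir hLne
    hL fun i => (hL i).isClosed
  rw [mem_iInter] at hy
  exact (infEDist_le_edist_of_mem (mem_iInter.2 fun i => (hy i).1)).trans
    (hy (Classical.arbitrary ι)).2

def IsSuperadditive (w : ℝ → ℝ → ℝ≥0∞) : Prop :=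
  ∀ r s t, r ≤ s → s ≤ t → w r s + w s t ≤ w r t

section Selector

variable {M : Type*} [MetricSpace M] {F : ℝ → Set M} {T : Set ℝ} {w : ℝ → ℝ → ℝ≥0∞}

structure IsExcessMajorant (F : ℝ → Set M) (T : Set ℝ) (w : ℝ → ℝ → ℝ≥0∞) : Prop where
  superadditive : IsSuperadditive w
  exc_le : ∀ s ∈ T, ∀ t ∈ T, s ≤ t → exc (F s) (F t) ≤ w s t

lemma IsExcessMajorant.mono {T' : Set ℝ} (hw : IsExcessMajorant F T w) (h : T' ⊆ T) :
    IsExcessMajorant F T' w :=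
  ⟨hw.superadditive, fun s hs t ht => hw.exc_le s (h hs) t (h ht)⟩

lemma IsExcessMajorant.update (hw : IsExcessMajorant F T w) {b : ℝ} (hb : b ∈ lowerBounds T)
    {B : Set M} (hB : B ⊆ F b) : IsExcessMajorant (Function.update F b B) T w := by
  refine ⟨hw.superadditive, fun s hs t ht hst => ?_⟩
  have hsub : Function.update F b B s ⊆ F s := by
    rcases eq_or_ne s b with rfl | hsb
    · simpa using hB
    · simp [hsb]
  rcases eq_or_ne t b with rfl | htb
  · obtain rfl : s = t := le_antisymm hst (hb hs)
    simp [exc_eq_zero_of_subset]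
  · rw [Function.update_of_ne htb]
    exact (exc_mono_left hsub _).trans (hw.exc_le s hs t ht hst)

def IsAdmissiblePath (F : ℝ → Set M) (w : ℝ → ℝ → ℝ≥0∞) (P : Set ℝ) (φ : ℝ → M) : Prop :=
  (∀ r ∈ P, φ r ∈ F r) ∧ ∀ r ∈ P, ∀ r' ∈ P, r ≤ r' → edist (φ r) (φ r') ≤ w r r'

lemma IsAdmissiblePath.mono {P P' : Set ℝ} {φ : ℝ → M} (hφ : IsAdmissiblePath F w P φ)
    (h : P' ⊆ P) : IsAdmissiblePath F w P' φ :=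
  ⟨fun r hr => hφ.1 r (h hr), fun r hr r' hr' => hφ.2 r (h hr) r' (h hr')⟩

lemma IsAdmissiblePath.exists_extend_insert (hF : ∀ t ∈ T, (F t).Nonempty ∧ IsCompact (F t))
    (hw : IsExcessMajorant F T w) {P : Finset ℝ} (hP : ↑P ⊆ T) {a : ℝ} (ha : a ∈ T)
    (hPa : ∀ r ∈ P, r ≤ a) {φ : ℝ → M} (hφ : IsAdmissiblePath F w P φ) :
    ∃ ψ, IsAdmissiblePath F w (insert a ↑P) ψ ∧ EqOn ψ φ P := by
  by_cases haP : a ∈ P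
  · exact ⟨φ, by rwa [insert_eq_of_mem (Finset.mem_coe.2 haP)], eqOn_refl _ _⟩
  have hne : ∀ r ∈ P, r ≠ a := fun r hr => ne_of_mem_of_not_mem hr haP
  -- a nearest point to the value at `max P` works for all of `P`, by superadditivity
  obtain ⟨y, hyF, hy⟩ : ∃ y ∈ F a, ∀ r ∈ P, edist (φ r) y ≤ w r a := by
    rcases P.eq_empty_or_nonempty with rfl | hPne
    · obtain ⟨y, hy⟩ := (hF a ha).1
      exact ⟨y, hy, by simp⟩
    have hm := P.max'_mem hPne
    obtain ⟨y, hy, hmy⟩ := (hF a ha).2.exists_infEDist_eq_edist (hF a ha).1 (φ (P.max' hPne))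
    refine ⟨y, hy, fun r hr => ?_⟩
    calc edist (φ r) y ≤ edist (φ r) (φ (P.max' hPne)) + edist (φ (P.max' hPne)) y :=
          edist_triangle _ _ _
      _ ≤ w r (P.max' hPne) + w (P.max' hPne) a := by
          refine add_le_add (hφ.2 r hr _ hm (P.le_max' r hr)) ?_
          rw [← hmy]
          exact (infEDist_le_exc (hφ.1 _ hm) _).trans (hw.exc_le _ (hP hm) a ha (hPa _ hm))
      _ ≤ w r a := hw.superadditive _ _ _ (P.le_max' r hr) (hPa _ hm)
  refine ⟨Function.update φ a y, ⟨?_, ?_⟩, fun r hr => Function.update_of_ne (hne r hr) _ _⟩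
  · rintro r (rfl | hr)
    · simpa using hyF
    · simpa [hne r hr] using hφ.1 r hr
  · rintro r (rfl | hr) r' (rfl | hr') hrr'
    · simp
    · exact absurd (le_antisymm (hPa r' hr') hrr') (hne r' hr')
    · simpa [hne r hr] using hy r hr
    · simpa [hne r hr, hne r' hr'] using hφ.2 r hr r' hr' hrr'

lemma IsAdmissiblePath.exists_extend (hF : ∀ t ∈ T, (F t).Nonempty ∧ IsCompact (F t))
    (hw : IsExcessMajorant F T w) {Q : Finset ℝ} (hQ : ↑Q ⊆ T) {φ : ℝ → M}
    (hφ : IsAdmissiblePath F w Q φ) (R : Finset ℝ) (hR : ↑R ⊆ T)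
    (hQR : ∀ q ∈ Q, ∀ r ∈ R, q ≤ r) :
    ∃ ψ, IsAdmissiblePath F w ↑(Q ∪ R) ψ ∧ EqOn ψ φ Q := by
  induction R using Finset.induction_on_max with
  | empty => exact ⟨φ, by simpa using hφ, eqOn_refl _ _⟩
  | insert a R hlt ih =>
    simp only [Finset.coe_insert, insert_subset_iff, Finset.mem_insert, forall_eq_or_imp] at hR hQR
    obtain ⟨ψ, hψ, hψφ⟩ := ih hR.2 fun q hq => (hQR q hq).2
    have hQRa : ∀ r ∈ Q ∪ R, r ≤ a := fun r hr => (Finset.mem_union.1 hr).elim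
      (fun hq => (hQR r hq).1) fun hr => (hlt r hr).le
    obtain ⟨ψ', hψ', hψ'ψ⟩ := hψ.exists_extend_insert hF hw
      (by simpa using union_subset hQ hR.2) hR.1 hQRa
    exact ⟨ψ', by simpa using hψ', fun q hq =>
      (hψ'ψ (Finset.mem_union_left _ hq)).trans (hψφ hq)⟩

def reachSet (F : ℝ → Set M) (w : ℝ → ℝ → ℝ≥0∞) (P : Finset ℝ) (t : ℝ) : Set M :=
  (fun φ : ℝ → M => φ t) '' {φ | IsAdmissiblePath F w (insert t ↑P) φ}

lemma reachSet_subset (P : Finset ℝ) (t : ℝ) : reachSet F w P t ⊆ F t := by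
  rintro _ ⟨φ, hφ, rfl⟩
  exact hφ.1 t (mem_insert _ _)

lemma reachSet_anti {P P' : Finset ℝ} (h : P ⊆ P') (t : ℝ) :
    reachSet F w P' t ⊆ reachSet F w P t :=
  image_mono fun _ hφ => hφ.mono (insert_subset_insert (Finset.coe_subset.2 h))

lemma reachSet_nonempty (hF : ∀ t ∈ T, (F t).Nonempty ∧ IsCompact (F t))
    (hw : IsExcessMajorant F T w) {P : Finset ℝ} (hP : ↑P ⊆ T) {t : ℝ} (ht : t ∈ T) :
    (reachSet F w P t).Nonempty := by
  obtain ⟨y, -⟩ := (hF t ht).1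
  obtain ⟨ψ, hψ, -⟩ := IsAdmissiblePath.exists_extend hF hw (Q := ∅) (φ := fun _ => y)
    (by simp) (by simp [IsAdmissiblePath]) (insert t P) (by simpa using insert_subset ht hP)
    (by simp)
  exact ⟨ψ t, ψ, by simpa using hψ, rfl⟩

lemma exc_reachSet_insert_le {P : Finset ℝ} {s t : ℝ} (hst : s ≤ t) :
    exc (reachSet F w (insert s P) t) (reachSet F w P s) ≤ w s t := by
  refine exc_le_iff.2 ?_
  rintro _ ⟨φ, hφ, rfl⟩
  have hs : s ∈ (insert t ↑(insert s P) : Set ℝ) := by simp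
  have hφs : φ s ∈ reachSet F w P s := ⟨φ, hφ.mono (by simp), rfl⟩
  exact (infEDist_le_edist_of_mem hφs).trans
    (edist_comm (φ s) (φ t) ▸ hφ.2 s hs t (mem_insert _ _) hst)

lemma exc_reachSet_filter_le (hF : ∀ t ∈ T, (F t).Nonempty ∧ IsCompact (F t))
    (hw : IsExcessMajorant F T w) {P : Finset ℝ} (hP : ↑P ⊆ T) {s t : ℝ} (hs : s ∈ T)
    (ht : t ∈ T) (hst : s ≤ t) :
    exc (reachSet F w (P.filter (· ≤ s)) s) (reachSet F w P t) ≤ w s t := by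
  refine exc_le_iff.2 ?_
  rintro _ ⟨φ, hφ, rfl⟩
  set Q := insert s (P.filter (· ≤ s))
  set R := insert t (P.filter (s < ·))
  have hQ : ↑Q ⊆ T := by
    simpa [Q] using insert_subset hs ((Finset.coe_subset.2 (Finset.filter_subset _ _)).trans hP)
  have hR : ↑R ⊆ T := by
    simpa [R] using insert_subset ht ((Finset.coe_subset.2 (Finset.filter_subset _ _)).trans hP)
  have hQR : ∀ q ∈ Q, ∀ r ∈ R, q ≤ r := by
    simp only [Q, R, Finset.mem_insert, Finset.mem_filter]
    rintro q (rfl | ⟨-, hq⟩) r (rfl | ⟨-, hr⟩) <;> linarith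
  obtain ⟨ψ, hψ, hψφ⟩ := IsAdmissiblePath.exists_extend hF hw hQ (by simpa [Q] using hφ) R hR hQR
  have hsQ : s ∈ Q := Finset.mem_insert_self _ _
  have hPQR : insert t ↑P ⊆ (↑(Q ∪ R) : Set ℝ) := by
    intro r hr
    simp only [Q, R, Finset.coe_union, Finset.coe_insert, Finset.coe_filter, mem_union,
      mem_insert_iff, mem_ofPred_eq] at hr ⊢
    rcases hr with rfl | hr
    · tauto
    · rcases le_or_gt r s with h | h <;> tauto
  have hψt : ψ t ∈ reachSet F w P t := ⟨ψ, hψ.mono hPQR, rfl⟩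
  refine (infEDist_le_edist_of_mem hψt).trans ?_
  dsimp only
  rw [show φ s = ψ s from (hψφ hsQ).symm]
  exact hψ.2 s (by simp [hsQ]) t (by simp [R]) hst


def IsCompactSelector (F : ℝ → Set M) (T : Set ℝ) (Γ : ℝ → Set M) : Prop :=
  ∀ t ∈ T, (Γ t).Nonempty ∧ IsCompact (Γ t) ∧ Γ t ⊆ F t

def selector (F : ℝ → Set M) (T : Set ℝ) (w : ℝ → ℝ → ℝ≥0∞) (t : ℝ) : Set M :=
  ⋂ P : {P : Finset ℝ // ↑P ⊆ T ∩ Iic t}, closure (reachSet F w P t)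

instance (T : Set ℝ) (t : ℝ) : Nonempty {P : Finset ℝ // ↑P ⊆ T ∩ Iic t} :=
  ⟨⟨∅, by simp⟩⟩

lemma directed_closure_reachSet (t : ℝ) :
    Directed (· ⊇ ·) fun P : {P : Finset ℝ // ↑P ⊆ T ∩ Iic t} => closure (reachSet F w P t) :=
  fun P₁ P₂ => ⟨⟨P₁.1 ∪ P₂.1, by simpa using union_subset P₁.2 P₂.2⟩,
    closure_mono (reachSet_anti Finset.subset_union_left t),
    closure_mono (reachSet_anti Finset.subset_union_right t)⟩

lemma isCompact_closure_reachSet {t : ℝ} (ht : IsCompact (F t)) (P : Finset ℝ) :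
    IsCompact (closure (reachSet F w P t)) :=
  ht.closure_of_subset (reachSet_subset P t)

lemma selector_subset {t : ℝ} (ht : IsClosed (F t)) : selector F T w t ⊆ F t :=
  (iInter_subset _ ⟨∅, by simp⟩).trans (closure_minimal (reachSet_subset _ t) ht)

lemma isCompact_selector {t : ℝ} (ht : IsCompact (F t)) : IsCompact (selector F T w t) :=
  ht.of_isClosed_subset (isClosed_iInter fun _ => isClosed_closure) (selector_subset ht.isClosed)

lemma selector_nonempty (hF : ∀ t ∈ T, (F t).Nonempty ∧ IsCompact (F t))
    (hw : IsExcessMajorant F T w) {t : ℝ} (ht : t ∈ T) : (selector F T w t).Nonempty :=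
  IsCompact.nonempty_iInter_of_directed_nonempty_isCompact_isClosed _
    (directed_closure_reachSet t)
    (fun P => (reachSet_nonempty hF hw (P.2.trans inter_subset_left) ht).closure)
    (fun P => isCompact_closure_reachSet (hF t ht).2 P) fun _ => isClosed_closure

lemma selector_eq_of_mem_lowerBounds {t : ℝ} (ht : IsClosed (F t)) (hmin : t ∈ lowerBounds T) :
    selector F T w t = F t := by
  refine (selector_subset ht).antisymm fun y hy => mem_iInter.2 fun P => subset_closure ?_
  have hP : ∀ r ∈ (insert t ↑P.1 : Set ℝ), r = t := by
    rintro r (rfl | hr)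
    · rfl
    · exact le_antisymm (P.2 hr).2 (hmin (P.2 hr).1)
  refine ⟨fun _ => y, ⟨fun r hr => ?_, fun r _ r' _ _ => by simp⟩, rfl⟩
  rwa [hP r hr]

lemma hausdorffEDist_selector_le (hF : ∀ t ∈ T, (F t).Nonempty ∧ IsCompact (F t))
    (hw : IsExcessMajorant F T w) {s t : ℝ} (hs : s ∈ T) (ht : t ∈ T) (hst : s ≤ t) :
    hausdorffEDist (selector F T w s) (selector F T w t) ≤ w s t := by
  refine hausdorffEDist_le_of_infEDist (fun y hy => ?_) fun z hz => ?_
  · refine infEDist_iInter_le (directed_closure_reachSet t)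
      (fun P => isCompact_closure_reachSet (hF t ht).2 P) fun P => ?_
    have hP : ↑(P.1.filter (· ≤ s)) ⊆ T ∩ Iic s := fun r hr => by
      simp only [Finset.coe_filter, mem_ofPred_eq] at hr
      exact ⟨(P.2 hr.1).1, hr.2⟩
    rw [infEDist_closure]
    exact (infEDist_le_exc_of_mem_closure (mem_iInter.1 hy ⟨_, hP⟩) _).trans
      (exc_reachSet_filter_le hF hw (P.2.trans inter_subset_left) hs ht hst)
  · refine infEDist_iInter_le (directed_closure_reachSet s)
      (fun P => isCompact_closure_reachSet (hF s hs).2 P) fun P => ?_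
    have hP : ↑(insert s P.1) ⊆ T ∩ Iic t := by
      have hPt := P.2.trans (inter_subset_inter_right T (Iic_subset_Iic.2 hst))
      simpa using insert_subset (show s ∈ T ∩ Iic t from ⟨hs, hst⟩) hPt
    rw [infEDist_closure]
    exact (infEDist_le_exc_of_mem_closure (mem_iInter.1 hz ⟨_, hP⟩) _).trans
      (exc_reachSet_insert_le hst)

theorem exists_selector_hausdorffEDist_le (hF : ∀ t ∈ T, (F t).Nonempty ∧ IsCompact (F t))
    (hw : IsExcessMajorant F T w) :
    ∃ Γ : ℝ → Set M, IsCompactSelector F T Γ ∧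
      ∀ s ∈ T, ∀ t ∈ T, s ≤ t → hausdorffEDist (Γ s) (Γ t) ≤ w s t :=
  ⟨selector F T w, fun t ht => ⟨selector_nonempty hF hw ht, isCompact_selector (hF t ht).2,
    selector_subset (hF t ht).2.isClosed⟩,
    fun _ hs _ ht hst => hausdorffEDist_selector_le hF hw hs ht hst⟩

theorem exists_selector_hausdorffEDist_le_of_isLeast
    (hF : ∀ t ∈ T, (F t).Nonempty ∧ IsCompact (F t)) (hw : IsExcessMajorant F T w) {b : ℝ}
    (hb : IsLeast T b) {B : Set M} (hBne : B.Nonempty) (hBc : IsCompact B) (hBF : B ⊆ F b) :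
    ∃ Γ : ℝ → Set M, IsCompactSelector F T Γ ∧
      (∀ s ∈ T, ∀ t ∈ T, s ≤ t → hausdorffEDist (Γ s) (Γ t) ≤ w s t) ∧ Γ b = B := by
  set F' := Function.update F b B
  have hF' : ∀ t ∈ T, (F' t).Nonempty ∧ IsCompact (F' t) := fun t ht => by
    rcases eq_or_ne t b with rfl | htb
    · simpa [F'] using ⟨hBne, hBc⟩
    · simpa [F', htb] using hF t ht
  have hw' : IsExcessMajorant F' T w := hw.update hb.2 hBF
  refine ⟨selector F' T w, fun t ht => ⟨selector_nonempty hF' hw' ht,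
    isCompact_selector (hF' t ht).2, (selector_subset (hF' t ht).2.isClosed).trans ?_⟩,
    fun _ hs _ ht hst => hausdorffEDist_selector_le hF' hw' hs ht hst, ?_⟩
  · rcases eq_or_ne t b with rfl | htb
    · simpa [F'] using hBF
    · simp [F', htb]
  · simpa [F'] using selector_eq_of_mem_lowerBounds (w := w) (hF' b hb.1).2.isClosed hb.2

end Selector

section Variation

variable {M : Type*} [MetricSpace M]

lemma sum_le_varBy (D : Set M → Set M → ℝ≥0∞) (G : ℝ → Set M) {S : Set ℝ} {u : ℕ → ℝ}
    (hu : Monotone u) (huS : ∀ i, u i ∈ S) (n : ℕ) :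
    ∑ i ∈ Finset.range n, D (G (u i)) (G (u (i + 1))) ≤ varBy D G S :=
  le_iSup (fun p : {p : ℕ × (ℕ → ℝ) // Monotone p.2 ∧ ∀ i, p.2 i ∈ S} =>
    ∑ i ∈ Finset.range p.1.1, D (G (p.1.2 i)) (G (p.1.2 (i + 1)))) ⟨(n, u), hu, huS⟩

lemma varBy_mono (D : Set M → Set M → ℝ≥0∞) (G : ℝ → Set M) {S S' : Set ℝ} (h : S ⊆ S') :
    varBy D G S ≤ varBy D G S' :=
  iSup_le fun p => sum_le_varBy D G p.2.1 (fun i => h (p.2.2 i)) _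

lemma varBy_empty (D : Set M → Set M → ℝ≥0∞) (G : ℝ → Set M) : varBy D G ∅ = 0 :=
  nonpos_iff_eq_zero.1 <| iSup_le fun p => absurd (p.2.2 0) (notMem_empty _)

lemma varBy_add_varBy_le (D : Set M → Set M → ℝ≥0∞) (G : ℝ → Set M) {S₁ S₂ S : Set ℝ}
    (h₁ : S₁ ⊆ S) (h₂ : S₂ ⊆ S) (h₁₂ : ∀ x ∈ S₁, ∀ y ∈ S₂, x ≤ y) :
    varBy D G S₁ + varBy D G S₂ ≤ varBy D G S := by
  rcases S₁.eq_empty_or_nonempty with rfl | ⟨x, hx⟩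
  · simpa [varBy_empty] using varBy_mono D G h₂
  rcases S₂.eq_empty_or_nonempty with rfl | ⟨y, hy⟩
  · simpa [varBy_empty] using varBy_mono D G h₁
  have : Nonempty {p : ℕ × (ℕ → ℝ) // Monotone p.2 ∧ ∀ i, p.2 i ∈ S₁} :=
    ⟨⟨(0, fun _ => x), monotone_const, fun _ => hx⟩⟩
  have : Nonempty {p : ℕ × (ℕ → ℝ) // Monotone p.2 ∧ ∀ i, p.2 i ∈ S₂} :=
    ⟨⟨(0, fun _ => y), monotone_const, fun _ => hy⟩⟩
  refine ENNReal.iSup_add_iSup_le fun ⟨⟨n₁, u⟩, hu, huS⟩ ⟨⟨n₂, v⟩, hv, hvS⟩ => ?_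
  -- concatenate: `u 0, …, u n₁, v 0, …, v n₂`, then drop the jump from `u n₁` to `v 0`
  let c : ℕ → ℝ := fun i => if i ≤ n₁ then u i else v (i - (n₁ + 1))
  have hc : Monotone c := by
    intro i j hij
    simp only [c]
    split_ifs with hi hj hj
    · exact hu hij
    · exact h₁₂ _ (huS i) _ (hvS _)
    · omega
    · exact hv (by omega)
  have hcS : ∀ i, c i ∈ S := fun i => by
    simp only [c]
    split_ifs
    exacts [h₁ (huS i), h₂ (hvS _)]
  refine le_trans ?_ (sum_le_varBy D G hc hcS (n₁ + (1 + n₂)))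
  rw [Finset.sum_range_add, Finset.sum_range_add]
  refine add_le_add (le_of_eq (Finset.sum_congr rfl fun i hi => ?_))
    (le_add_left (le_of_eq (Finset.sum_congr rfl fun i _ => ?_)))
  · have := Finset.mem_range.1 hi
    simp [c, show i ≤ n₁ by omega, show i + 1 ≤ n₁ by omega]
  · simp [c, show n₁ + (1 + i) - (n₁ + 1) = i by omega,
      show n₁ + (1 + i) + 1 - (n₁ + 1) = i + 1 by omega]

lemma IsSuperadditive.sum_le {w : ℝ → ℝ → ℝ≥0∞} (hw : IsSuperadditive w) {u : ℕ → ℝ}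
    (hu : Monotone u) (n : ℕ) :
    ∑ i ∈ Finset.range n, w (u i) (u (i + 1)) ≤ w (u 0) (u n) := by
  induction n with
  | zero => simp
  | succ n ih =>
    rw [Finset.sum_range_succ]
    exact (add_le_add ih le_rfl).trans (hw _ _ _ (hu (Nat.zero_le n)) (hu n.le_succ))

lemma varBy_le_of_isSuperadditive {D : Set M → Set M → ℝ≥0∞} {G : ℝ → Set M} {S : Set ℝ}
    {w : ℝ → ℝ → ℝ≥0∞} (hw : IsSuperadditive w)
    (hD : ∀ s ∈ S, ∀ t ∈ S, s ≤ t → D (G s) (G t) ≤ w s t) {c : ℝ≥0∞}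
    (hc : ∀ s ∈ S, ∀ t ∈ S, s ≤ t → w s t ≤ c) : varBy D G S ≤ c :=
  iSup_le fun ⟨⟨n, u⟩, hu, huS⟩ =>
    calc ∑ i ∈ Finset.range n, D (G (u i)) (G (u (i + 1)))
        ≤ ∑ i ∈ Finset.range n, w (u i) (u (i + 1)) :=
          Finset.sum_le_sum fun i _ => hD _ (huS i) _ (huS (i + 1)) (hu i.le_succ)
      _ ≤ w (u 0) (u n) := hw.sum_le hu n
      _ ≤ c := hc _ (huS 0) _ (huS n) (hu (Nat.zero_le n))

noncomputable def varPlusIcc (F : ℝ → Set M) (T : Set ℝ) (s t : ℝ) : ℝ≥0∞ :=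
  varPlus F (T ∩ Icc s t)

lemma varPlusIcc_le_varPlus (F : ℝ → Set M) {T S : Set ℝ} {s t : ℝ} (h : T ∩ Icc s t ⊆ S) :
    varPlusIcc F T s t ≤ varPlus F S :=
  varBy_mono _ _ h

lemma isExcessMajorant_varPlusIcc (F : ℝ → Set M) (T : Set ℝ) :
    IsExcessMajorant F T (varPlusIcc F T) where
  superadditive _ _ _ hrs hst :=
    varBy_add_varBy_le _ _ (inter_subset_inter_right _ (Icc_subset_Icc_right hst))
      (inter_subset_inter_right _ (Icc_subset_Icc_left hrs)) fun _ hx _ hy => hx.2.2.trans hy.2.1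
  exc_le s hs t ht hst := by
    have hu : Monotone fun i : ℕ => if i = 0 then s else t := by
      intro i j hij
      dsimp only
      split_ifs <;> first | exact le_rfl | exact hst | omega
    have := sum_le_varBy exc F (S := T ∩ Icc s t) hu
      (fun i => by split_ifs <;> simp [hs, ht, hst]) 1
    simpa [varPlusIcc, varPlus] using this

end Variation

section Gluing

variable {M : Type*} [MetricSpace M] {F : ℝ → Set M} {T : Set ℝ} {t₀ : ℝ}

lemma IsCompactSelector.piecewise {Γ₁ Γ₂ : ℝ → Set M}
    (h₁ : IsCompactSelector F (T ∩ Iio t₀) Γ₁) (h₂ : IsCompactSelector F (T ∩ Ici t₀) Γ₂) :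
    IsCompactSelector F T ((Iio t₀).piecewise Γ₁ Γ₂) := fun t ht => by
  by_cases h : t < t₀
  · simpa [piecewise_eq_of_mem _ _ _ (mem_Iio.2 h)] using h₁ t ⟨ht, h⟩
  · simpa [piecewise_eq_of_notMem _ _ _ (notMem_Iio.2 (not_lt.1 h))] using
      h₂ t ⟨ht, not_lt.1 h⟩

lemma hausdorffEDist_piecewise_le {Γ₁ Γ₂ : ℝ → Set M} {w : ℝ → ℝ → ℝ≥0∞}
    (h₁ : ∀ s ∈ T ∩ Iio t₀, ∀ t ∈ T ∩ Iio t₀, s ≤ t → hausdorffEDist (Γ₁ s) (Γ₁ t) ≤ w s t)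
    (h₂ : ∀ s ∈ T ∩ Ici t₀, ∀ t ∈ T ∩ Ici t₀, s ≤ t → hausdorffEDist (Γ₂ s) (Γ₂ t) ≤ w s t)
    {s t : ℝ} (hs : s ∈ T) (ht : t ∈ T) (hst : s ≤ t) (hsame : s < t₀ ↔ t < t₀) :
    hausdorffEDist ((Iio t₀).piecewise Γ₁ Γ₂ s) ((Iio t₀).piecewise Γ₁ Γ₂ t) ≤ w s t := by
  by_cases h : t < t₀
  · have h' := hsame.2 h
    simpa [piecewise_eq_of_mem _ _ _ (mem_Iio.2 h), piecewise_eq_of_mem _ _ _ (mem_Iio.2 h')]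
      using h₁ s ⟨hs, h'⟩ t ⟨ht, h⟩ hst
  · have h' := mt hsame.1 h
    simpa [piecewise_eq_of_notMem _ _ _ (notMem_Iio.2 (not_lt.1 h)),
      piecewise_eq_of_notMem _ _ _ (notMem_Iio.2 (not_lt.1 h'))]
      using h₂ s ⟨hs, not_lt.1 h'⟩ t ⟨ht, not_lt.1 h⟩ hst

lemma exists_hausdorffEDist_le_across {G : ℝ → Set M} {S₁ S₂ : Set ℝ} {V : ℝ≥0∞} (hV : V ≠ ⊤)
    (hG : ∀ t ∈ S₁ ∪ S₂, (G t).Nonempty ∧ Bornology.IsBounded (G t))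
    (h₁ : ∀ s ∈ S₁, ∀ t ∈ S₁, hausdorffEDist (G s) (G t) ≤ V)
    (h₂ : ∀ s ∈ S₂, ∀ t ∈ S₂, hausdorffEDist (G s) (G t) ≤ V) :
    ∃ C ≠ ⊤, ∀ s ∈ S₁, ∀ t ∈ S₂, hausdorffEDist (G s) (G t) ≤ C := by
  rcases S₁.eq_empty_or_nonempty with rfl | ⟨p, hp⟩
  · exact ⟨0, ENNReal.zero_ne_top, by simp⟩
  rcases S₂.eq_empty_or_nonempty with rfl | ⟨q, hq⟩
  · exact ⟨0, ENNReal.zero_ne_top, by simp⟩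
  have hpq : hausdorffEDist (G p) (G q) ≠ ⊤ :=
    hausdorffEDist_ne_top_of_nonempty_of_bounded (hG p (.inl hp)).1 (hG q (.inr hq)).1
      (hG p (.inl hp)).2 (hG q (.inr hq)).2
  refine ⟨V + hausdorffEDist (G p) (G q) + V, by simp [hV, hpq], fun s hs t ht => ?_⟩
  calc hausdorffEDist (G s) (G t)
      ≤ hausdorffEDist (G s) (G p) + hausdorffEDist (G p) (G q) + hausdorffEDist (G q) (G t) :=
        hausdorffEDist_triangle.trans (add_le_add hausdorffEDist_triangle le_rfl)
    _ ≤ V + hausdorffEDist (G p) (G q) + V :=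
        add_le_add (add_le_add (h₁ s hs p hp) le_rfl) (h₂ q hq t ht)

lemma varH_le_varPlus_of_hausdorffEDist_le {G : ℝ → Set M} {S : Set ℝ}
    (hS : ∀ s ∈ S, ∀ t ∈ S, T ∩ Icc s t ⊆ S)
    (hd : ∀ s ∈ S, ∀ t ∈ S, s ≤ t → hausdorffEDist (G s) (G t) ≤ varPlusIcc F T s t) :
    varH G S ≤ varPlus F S :=
  varBy_le_of_isSuperadditive (isExcessMajorant_varPlusIcc F T).superadditive hd
    fun s hs t ht _ => varPlusIcc_le_varPlus F (hS s hs t ht)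

lemma varH_lt_top_of_hausdorffEDist_le {G : ℝ → Set M} (hV : varPlus F T < ⊤)
    (hG : ∀ t ∈ T, (G t).Nonempty ∧ Bornology.IsBounded (G t))
    (hd : ∀ s ∈ T, ∀ t ∈ T, s ≤ t → (s < t₀ ↔ t < t₀) →
      hausdorffEDist (G s) (G t) ≤ varPlusIcc F T s t) :
    varH G T < ⊤ := by
  have hpiece : ∀ s ∈ T, ∀ t ∈ T, (s < t₀ ↔ t < t₀) →
      hausdorffEDist (G s) (G t) ≤ varPlus F T := by
    intro s hs t ht hsame
    rcases le_total s t with hst | hts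
    · exact (hd s hs t ht hst hsame).trans (varPlusIcc_le_varPlus F inter_subset_left)
    · rw [hausdorffEDist_comm]
      exact (hd t ht s hs hts hsame.symm).trans (varPlusIcc_le_varPlus F inter_subset_left)
  obtain ⟨C, hC, hcross⟩ := exists_hausdorffEDist_le_across (S₁ := T ∩ Iio t₀)
    (S₂ := T ∩ Ici t₀) hV.ne (fun t ht => hG t (ht.elim And.left And.left))
    (fun s hs t ht => hpiece s hs.1 t ht.1 (iff_of_true hs.2 ht.2))
    (fun s hs t ht => hpiece s hs.1 t ht.1 (iff_of_false (not_lt.2 hs.2) (not_lt.2 ht.2)))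
  -- a partition has at most one pair of consecutive points straddling `t₀`; charge `C` to it
  let w s t := varPlusIcc F T s t + if s < t₀ ∧ t₀ ≤ t then C else 0
  have hw : IsSuperadditive w := by
    intro r s t hrs hst
    have hind : ((if r < t₀ ∧ t₀ ≤ s then C else 0) + if s < t₀ ∧ t₀ ≤ t then C else 0) ≤
        if r < t₀ ∧ t₀ ≤ t then C else 0 := by
      split_ifs with h₁ h₂ h₃ <;> simp_all <;> linarith
    exact (add_add_add_comm _ _ _ _).le.trans
      (add_le_add ((isExcessMajorant_varPlusIcc F T).superadditive r s t hrs hst) hind)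
  refine lt_of_le_of_lt (varBy_le_of_isSuperadditive (c := varPlus F T + C) hw
    (fun s hs t ht hst => show hausdorffEDist (G s) (G t) ≤ w s t from ?_) fun s _ t _ _ => add_le_add
      (varPlusIcc_le_varPlus F inter_subset_left) (by split_ifs <;> simp))
    (ENNReal.add_lt_top.2 ⟨hV, hC.lt_top⟩)
  by_cases h : s < t₀ ∧ t₀ ≤ t
  · simpa [w, h] using (hcross s ⟨hs, h.1⟩ t ⟨ht, h.2⟩).trans le_add_self
  · simpa [w, h] using hd s hs t ht hst
      ⟨fun hs₀ => lt_of_not_ge fun ht₀ => h ⟨hs₀, ht₀⟩, hst.trans_lt⟩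

end Gluing

theorem exists_selector_of_varPlus_lt_top_general {M : Type*} [MetricSpace M]
    (T : Set ℝ)
    (F : ℝ → Set M) (hF : ∀ t ∈ T, (F t).Nonempty ∧ IsCompact (F t))
    (hV : varPlus F T < ⊤)
    (t₀ : ℝ) (ht₀ : t₀ ∈ T) (X₀ : Set M) (hX₀ : X₀.Nonempty) (hX₀c : IsCompact X₀) :
    ∃ Γ : ℝ → Set M,
      (∀ t ∈ T, (Γ t).Nonempty ∧ IsCompact (Γ t) ∧ Γ t ⊆ F t) ∧
      varH Γ T < ⊤ ∧
      EMetric.hausdorffEdist X₀ (Γ t₀) ≤ exc X₀ (F t₀) ∧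
      varH Γ (T ∩ Set.Ico (sInf T) t₀) ≤ varPlus F (T ∩ Set.Ico (sInf T) t₀) ∧
      varH Γ (T ∩ Set.Ici t₀) ≤ varPlus F (T ∩ Set.Ici t₀) ∧
      (X₀ ⊆ F t₀ → Γ t₀ = X₀) := by
  have hw := isExcessMajorant_varPlusIcc F T
  obtain ⟨Γ₁, hΓ₁, hd₁⟩ := exists_selector_hausdorffEDist_le (fun t ht => hF t ht.1)
    (hw.mono (inter_subset_left (t := Iio t₀)))
  obtain ⟨Γ₂, hΓ₂, hd₂, hΓ₂t₀⟩ := exists_selector_hausdorffEDist_le_of_isLeast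
    (fun t ht => hF t ht.1) (hw.mono inter_subset_left) ⟨⟨ht₀, le_rfl⟩, fun _ ht => ht.2⟩
    (nearPart_nonempty hX₀ (hF t₀ ht₀).2 (hF t₀ ht₀).1) (isCompact_nearPart X₀ (hF t₀ ht₀).2)
    (nearPart_subset X₀ (F t₀))
  set Γ := (Iio t₀).piecewise Γ₁ Γ₂
  have hΓ : IsCompactSelector F T Γ := hΓ₁.piecewise hΓ₂
  have hd := fun s hs t ht => hausdorffEDist_piecewise_le hd₁ hd₂ (s := s) (t := t) hs ht
  have hΓt₀ : Γ t₀ = nearPart X₀ (F t₀) := by simpa [Γ] using hΓ₂t₀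
  refine ⟨Γ, hΓ, varH_lt_top_of_hausdorffEDist_le hV
      (fun t ht => ⟨(hΓ t ht).1, (hΓ t ht).2.1.isBounded⟩) hd,
    hΓt₀ ▸ hausdorffEDist_nearPart_le (hF t₀ ht₀).2 (hF t₀ ht₀).1,
    varH_le_varPlus_of_hausdorffEDist_le
      (fun s hs t ht r hr => ⟨hr.1, hs.2.1.trans hr.2.1, hr.2.2.trans_lt ht.2.2⟩)
      fun s hs t ht hst => hd s hs.1 t ht.1 hst (iff_of_true hs.2.2 ht.2.2),
    varH_le_varPlus_of_hausdorffEDist_le (fun s hs t ht r hr => ⟨hr.1, hs.2.trans hr.2.1⟩)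
      fun s hs t ht hst => hd s hs.1 t ht.1 hst (iff_of_false (not_lt.2 hs.2) (not_lt.2 ht.2)),
    fun h => hΓt₀.trans (nearPart_eq_of_subset hX₀c.isClosed h)⟩

/-- Main selector theorem (Theorem 1(a)): if a = inf T ∈ T and V⁺(F,T) < ∞, then F admits
a compact-valued selector Γ of bounded variation with the stated estimates. -/
theorem exists_selector_of_varPlus_lt_top {M : Type*} [MetricSpace M]
    (T : Set ℝ) (hTbdd : BddBelow T) (ha : sInf T ∈ T)
    (F : ℝ → Set M) (hF : ∀ t ∈ T, (F t).Nonempty ∧ IsCompact (F t))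
    (hV : varPlus F T < ⊤)
    (t₀ : ℝ) (ht₀ : t₀ ∈ T) (X₀ : Set M) (hX₀ : X₀.Nonempty) (hX₀c : IsCompact X₀) :
    ∃ Γ : ℝ → Set M,
      (∀ t ∈ T, (Γ t).Nonempty ∧ IsCompact (Γ t) ∧ Γ t ⊆ F t) ∧
      varH Γ T < ⊤ ∧
      EMetric.hausdorffEdist X₀ (Γ t₀) ≤ exc X₀ (F t₀) ∧
      varH Γ (T ∩ Set.Ico (sInf T) t₀) ≤ varPlus F (T ∩ Set.Ico (sInf T) t₀) ∧
      varH Γ (T ∩ Set.Ici t₀) ≤ varPlus F (T ∩ Set.Ici t₀) ∧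
      (X₀ ⊆ F t₀ → Γ t₀ = X₀) :=
  exists_selector_of_varPlus_lt_top_general T F hF hV t₀ ht₀ X₀ hX₀ hX₀c
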